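/- arXiv:1411.4498 — 5 statements merged into one kernel-verified Lean document; each statement's English description precedes it below -/
import Mathlib

section
/- Let A = {Q_1, …, Q_t} be a sequence of queries with t ≤ (k/(2b))·log₂(n/k) − (k+1)/b, where k ≤ n, k is even, and k/2 is a prime power. Then there exist two sets A, B ∈ F_k^n such that (a) |A ∩ B| = k/2, and (b) |A ∩ Q_{i,β}| is odd if and only if |B ∩ Q_{i,β}| is odd, for every 1 ≤ β ≤ b and 1 ≤ i ≤ t. -/
open scoped Classical

/-- `Qsub Q β` is the set of stations transmitting on channel `β` in query `Q`,
i.e. `Q_{i,β} = {x : (x,β) ∈ Q_i}`. -/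
def Qsub {n b : ℕ} (Q : Finset (Fin n × Fin b)) (β : Fin b) : Finset (Fin n) :=
  Finset.univ.filter fun x => (x, β) ∈ Q

/-!
Write `k = 2q` and sort the `(k - 1)`-subsets `A` of `[n]` by their parity signature, the vector
of parities of `|A ∩ Q_{i,β}|` over all rounds and channels. The bound on `t` gives
`2^{tb} · C(n, q - 1) < C(n, 2q - 1)`, so some signature class has more than `C(n, q - 1)`
members. For `q = p^m`, the inclusion vectors of `(2q - 1)`-sets against the `(q - 1)`-sets are
orthogonal over `ZMod p` as long as no two sets meet in exactly `q - 1` points (Lucas: `C(q + r, j)`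
is `C(r, j)` mod `p` for `j < q`), so that class contains `A ≠ B` with `|A ∩ B| = q - 1`. Adding a
common point outside `A ∪ B` keeps the signatures equal and gives two `k`-sets meeting in `q`
points.
-/

open Finset Polynomial

theorem choose_prime_pow_add (p : ℕ) [Fact p.Prime] (m r : ℕ) {j : ℕ} (hj : j < p ^ m) :
    ((p ^ m + r).choose j : ZMod p) = (r.choose j : ZMod p) := by
  have h : ((X + 1 : (ZMod p)[X])) ^ (p ^ m + r) = X ^ p ^ m * (X + 1) ^ r + (X + 1) ^ r := by
    rw [pow_add, add_pow_char_pow, one_pow, add_mul, one_mul]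
  simpa [coeff_X_add_one_pow, coeff_X_pow_mul', hj.not_ge] using congrArg (coeff · j) h

section Rank
variable (K : Type*) [Field K] {α : Type*} [Fintype α] [DecidableEq α]

def inclusionVector (s : ℕ) (A : Finset α) : powersetCard s (univ : Finset α) → K :=
  fun S => if (S : Finset α) ⊆ A then 1 else 0

theorem inclusionVector_dotProduct (s : ℕ) (A B : Finset α) :
    inclusionVector K s A ⬝ᵥ inclusionVector K s B = ((#(A ∩ B)).choose s : K) := by
  have : {S ∈ powersetCard s (univ : Finset α) | S ⊆ A ∩ B} = powersetCard s (A ∩ B) := by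
    ext S; simp [mem_powersetCard, and_comm]
  simp only [dotProduct, inclusionVector, ite_mul, one_mul, zero_mul, ← ite_and,
    ← subset_inter_iff]
  rw [sum_coe_sort (powersetCard s univ) (fun S => if S ⊆ A ∩ B then (1 : K) else 0),
    sum_boole, this, card_powersetCard]

variable {K}

theorem card_le_choose_of_choose_card_inter (G : Finset (Finset α)) (s : ℕ)
    (hdiag : ∀ A ∈ G, ((#A).choose s : K) ≠ 0)
    (hoff : ∀ A ∈ G, ∀ B ∈ G, A ≠ B → ((#(A ∩ B)).choose s : K) = 0) :
    #G ≤ (Fintype.card α).choose s := by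
  have hli : LinearIndependent K fun A : G => inclusionVector K s (A : Finset α) := by
    rw [Fintype.linearIndependent_iff]
    intro g hg B
    have h := congrArg (· ⬝ᵥ inclusionVector K s (B : Finset α)) hg
    simp only [sum_dotProduct, smul_dotProduct, inclusionVector_dotProduct, zero_dotProduct,
      smul_eq_mul] at h
    rwa [sum_eq_single B (fun A _ hAB => by rw [hoff A A.2 B B.2 (Subtype.coe_ne_coe.2 hAB),
      mul_zero]) (by simp), inter_self, mul_eq_zero, or_iff_left (hdiag B B.2)] at h
  simpa using hli.fintype_card_le_finrank

end Rank

theorem card_inter_lt_of_card_eq {α : Type*} [DecidableEq α] {A B : Finset α} (hAB : A ≠ B)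
    (hcard : #A = #B) : #(A ∩ B) < #A := by
  refine card_lt_card (inter_subset_left.ssubset_of_ne fun h => hAB ?_)
  exact eq_of_subset_of_card_le (inter_eq_left.1 h) hcard.ge

section FranklWilson
variable {α : Type*} [Fintype α] [DecidableEq α]

/- The case `κ = 2q - 1`, `λ = q - 1` of the Frankl–Füredi bound, which then reads
`C(n, q - 1)`. -/
theorem card_le_choose_of_card_inter_ne {q : ℕ} (hq : IsPrimePow q) (G : Finset (Finset α))
    (hG : ∀ A ∈ G, #A = 2 * q - 1) (hfree : ∀ A ∈ G, ∀ B ∈ G, A ≠ B → #(A ∩ B) ≠ q - 1) :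
    #G ≤ (Fintype.card α).choose (q - 1) := by
  obtain ⟨p, m, hp, -, rfl⟩ := hq
  have : Fact p.Prime := ⟨hp.nat_prime⟩
  have hq : 0 < p ^ m := pow_pos hp.nat_prime.pos m
  apply card_le_choose_of_choose_card_inter (K := ZMod p)
  · intro A hA
    rw [hG A hA, show 2 * p ^ m - 1 = p ^ m + (p ^ m - 1) by omega,
      choose_prime_pow_add p m _ (by omega), Nat.choose_self, Nat.cast_one]
    exact one_ne_zero
  · intro A hA B hB hAB
    have hlt := card_inter_lt_of_card_eq hAB ((hG A hA).trans (hG B hB).symm)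
    rw [hG A hA] at hlt
    rcases (hfree A hA B hB hAB).lt_or_gt with hsmall | hlarge
    · rw [Nat.choose_eq_zero_of_lt hsmall, Nat.cast_zero]
    · obtain ⟨r, hr⟩ := Nat.exists_eq_add_of_le (show p ^ m ≤ #(A ∩ B) by omega)
      rw [hr, choose_prime_pow_add p m _ (by omega), Nat.choose_eq_zero_of_lt (by omega),
        Nat.cast_zero]

end FranklWilson

section Parity
variable {α ι : Type*} [DecidableEq α]

def paritySignature (S : ι → Finset α) (A : Finset α) : ι → ZMod 2 :=
  fun i => (#(A ∩ S i) : ZMod 2)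

theorem paritySignature_insert (S : ι → Finset α) {x : α} {A : Finset α} (hx : x ∉ A) :
    paritySignature S (insert x A) = paritySignature S {x} + paritySignature S A := by
  have hdisj : Disjoint ({x} : Finset α) A := disjoint_singleton_left.2 hx
  funext i
  simp only [paritySignature, Pi.add_apply, insert_eq, union_inter_distrib_right,
    card_union_of_disjoint (hdisj.mono inter_subset_left inter_subset_left), Nat.cast_add]

theorem odd_card_inter_iff_of_paritySignature_eq (S : ι → Finset α) {A B : Finset α}
    (h : paritySignature S A = paritySignature S B) (i : ι) :
    Odd #(A ∩ S i) ↔ Odd #(B ∩ S i) := by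
  rw [← ZMod.natCast_eq_one_iff_odd, ← ZMod.natCast_eq_one_iff_odd]
  exact Eq.congr_left (congrFun h i)

theorem exists_card_inter_eq_of_paritySignature_eq [Fintype α] [Fintype ι] (S : ι → Finset α)
    {q : ℕ} (hq : IsPrimePow q)
    (h : 2 ^ Fintype.card ι * (Fintype.card α).choose (q - 1)
      < (Fintype.card α).choose (2 * q - 1)) :
    ∃ A B : Finset α, #A = 2 * q - 1 ∧ #B = 2 * q - 1 ∧ #(A ∩ B) = q - 1 ∧
      paritySignature S A = paritySignature S B := by
  obtain ⟨y, -, hy⟩ := exists_lt_card_fiber_of_mul_lt_card_of_maps_to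
    (f := paritySignature S) (s := powersetCard (2 * q - 1) univ) (t := univ)
    (fun _ _ => mem_univ _) (by simpa using h)
  by_contra! hne
  refine hy.not_ge (card_le_choose_of_card_inter_ne hq _ (fun A hA => ?_) fun A hA B hB _ => ?_)
  · exact (mem_powersetCard.1 (mem_filter.1 hA).1).2
  · simp only [mem_filter, mem_powersetCard] at hA hB
    exact fun hAB => hne A B hA.1.2 hB.1.2 hAB (hA.2.trans hB.2.symm)

end Parity

theorem Nat.choose_mul_sub_pow_le (n s j : ℕ) :
    n.choose s * (n - (s + j)) ^ j ≤ n.choose (s + j) * (s + j) ^ j := by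
  induction j with
  | zero => simp
  | succ j ih =>
    calc n.choose s * (n - (s + (j + 1))) ^ (j + 1)
        ≤ n.choose s * (n - (s + j)) ^ j * (n - (s + j)) := by
          rw [pow_succ, ← mul_assoc]; gcongr <;> omega
      _ ≤ n.choose (s + j) * (s + j) ^ j * (n - (s + j)) := by gcongr
      _ = n.choose (s + j + 1) * (s + j + 1) * (s + j) ^ j := by
          rw [Nat.choose_succ_right_eq]; ring
      _ ≤ n.choose (s + (j + 1)) * (s + (j + 1)) ^ (j + 1) := by
          rw [← add_assoc, pow_succ, mul_comm ((s + j + 1) ^ j), ← mul_assoc]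
          exact Nat.mul_le_mul_left _ (Nat.pow_le_pow_left (Nat.le_succ _) j)

theorem two_pow_le_pow_of_le_mul_logb {m q : ℕ} {x : ℝ} (hx : 0 ≤ x) (hm : 0 < m)
    (h : (m : ℝ) ≤ q * Real.logb 2 x) : (2 : ℝ) ^ m ≤ x ^ q := by
  rcases hx.eq_or_lt with rfl | hx
  · simp only [Real.logb_zero, mul_zero, Nat.cast_nonpos] at h
    omega
  rw [← Real.logb_pow, Real.le_logb_iff_rpow_le one_lt_two (by positivity),
    Real.rpow_natCast] at h
  exact h

theorem two_pow_mul_pow_le_of_le_logb {n b t q : ℕ} (hb : 0 < b) (hq : 0 < q)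
    (ht : (t : ℝ) ≤ 2 * q / (2 * b) * Real.logb 2 (n / (2 * q)) - (2 * q + 1) / b) :
    2 ^ (t * b + 2 * q + 1) * (2 * q) ^ q ≤ n ^ q := by
  have hlog : ((t * b + 2 * q + 1 : ℕ) : ℝ) ≤ q * Real.logb 2 (n / (2 * q)) := by
    have hbR : (0 : ℝ) < b := by exact_mod_cast hb
    have := mul_le_mul_of_nonneg_right ht hbR.le
    field_simp at this
    push_cast
    linarith
  have := two_pow_le_pow_of_le_mul_logb (by positivity) (by omega) hlog
  rw [div_pow, le_div_iff₀ (by positivity)] at this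
  exact_mod_cast this

theorem lt_of_two_pow_mul_pow_le {m n q : ℕ} (hq : 0 < q)
    (h : 2 ^ (m + 2 * q + 1) * (2 * q) ^ q ≤ n ^ q) : 8 * q < n := by
  have h8 : 2 * (8 * q) ^ q ≤ n ^ q := by
    calc 2 * (8 * q) ^ q = 2 ^ (2 * q + 1) * (2 * q) ^ q := by
          rw [show 8 * q = 2 ^ 2 * (2 * q) by ring, mul_pow, ← pow_mul]; ring
      _ ≤ 2 ^ (m + 2 * q + 1) * (2 * q) ^ q := by gcongr <;> omega
      _ ≤ n ^ q := h
  have hpos : 0 < (8 * q) ^ q := by positivity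
  exact (Nat.pow_lt_pow_iff_left hq.ne').1 (by omega)

theorem two_pow_mul_choose_lt_choose {m n q : ℕ} (hq : 0 < q)
    (h : 2 ^ (m + 2 * q + 1) * (2 * q) ^ q ≤ n ^ q) :
    2 ^ m * n.choose (q - 1) < n.choose (2 * q - 1) := by
  have hn := lt_of_two_pow_mul_pow_le hq h
  have hratio : 2 ^ (m + 1) * (2 * q - 1) ^ q ≤ (n - (2 * q - 1)) ^ q := by
    refine Nat.le_of_mul_le_mul_left ?_ (pow_pos (by norm_num : 0 < 4) q)
    calc 4 ^ q * (2 ^ (m + 1) * (2 * q - 1) ^ q)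
        ≤ 4 ^ q * (2 ^ (m + 1) * (2 * q) ^ q) := by gcongr; omega
      _ = 2 ^ (m + 2 * q + 1) * (2 * q) ^ q := by
          rw [show (4 : ℕ) = 2 ^ 2 by rfl, ← pow_mul]; ring
      _ ≤ (4 * (n - (2 * q - 1))) ^ q := h.trans (Nat.pow_le_pow_left (by omega) q)
      _ = 4 ^ q * (n - (2 * q - 1)) ^ q := mul_pow _ _ _
  have hchoose := Nat.choose_mul_sub_pow_le n (q - 1) q
  rw [show q - 1 + q = 2 * q - 1 by omega] at hchoose
  have hdouble : 2 ^ (m + 1) * n.choose (q - 1) ≤ n.choose (2 * q - 1) := by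
    refine Nat.le_of_mul_le_mul_right ?_ (pow_pos (by omega : 0 < 2 * q - 1) q)
    calc 2 ^ (m + 1) * n.choose (q - 1) * (2 * q - 1) ^ q
        = n.choose (q - 1) * (2 ^ (m + 1) * (2 * q - 1) ^ q) := by ring
      _ ≤ n.choose (q - 1) * (n - (2 * q - 1)) ^ q := by gcongr
      _ ≤ n.choose (2 * q - 1) * (2 * q - 1) ^ q := hchoose
  have hpos : 0 < 2 ^ m * n.choose (q - 1) := by
    have := Nat.choose_pos (show q - 1 ≤ n by omega)
    positivity
  rw [pow_succ] at hdouble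
  linarith

theorem statement_1_general (n b t k : ℕ) (hb : 0 < b)
    (hke : Even k) (hpp : IsPrimePow (k / 2))
    (Q : Fin t → Finset (Fin n × Fin b))
    (ht : (t : ℝ) ≤ (k : ℝ) / (2 * b) * Real.logb 2 ((n : ℝ) / k) - ((k : ℝ) + 1) / b) :
    ∃ A ∈ Finset.powersetCard k (Finset.univ : Finset (Fin n)),
      ∃ B ∈ Finset.powersetCard k (Finset.univ : Finset (Fin n)),
        (A ∩ B).card = k / 2 ∧
        ∀ (i : Fin t) (β : Fin b),
          (Odd (A ∩ Qsub (Q i) β).card ↔ Odd (B ∩ Qsub (Q i) β).card) := by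
  obtain ⟨q, rfl⟩ := hke.two_dvd
  rw [Nat.mul_div_cancel_left q two_pos] at hpp ⊢
  have hq : 0 < q := hpp.pos
  have hpow := two_pow_mul_pow_le_of_le_logb hb hq (by exact_mod_cast ht)
  have hn := lt_of_two_pow_mul_pow_le hq hpow
  let S : Fin t × Fin b → Finset (Fin n) := fun z => Qsub (Q z.1) z.2
  obtain ⟨A, B, hA, hB, hAB, hsig⟩ := exists_card_inter_eq_of_paritySignature_eq S hpp
    (by simpa using two_pow_mul_choose_lt_choose hq hpow)
  have hfresh : #(A ∪ B) < #(univ : Finset (Fin n)) := by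
    have := card_union_add_card_inter A B
    rw [card_univ, Fintype.card_fin]
    omega
  obtain ⟨x, -, hx⟩ := exists_mem_notMem_of_card_lt_card hfresh
  rw [notMem_union] at hx
  refine ⟨insert x A, ?_, insert x B, ?_, ?_, fun i β => ?_⟩
  · simp only [mem_powersetCard, subset_univ, card_insert_of_notMem hx.1, hA, true_and]; omega
  · simp only [mem_powersetCard, subset_univ, card_insert_of_notMem hx.2, hB, true_and]; omega
  · rw [← insert_inter_distrib, card_insert_of_notMem (by simp [hx.1]), hAB]; omega
  · refine odd_card_inter_iff_of_paritySignature_eq S ?_ (i, β)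
    rw [paritySignature_insert _ hx.1, paritySignature_insert _ hx.2, hsig]

/-- Let `Q_1, …, Q_t` be a sequence of queries with
`t ≤ (k/(2b))·log₂(n/k) − (k+1)/b`, where `k ≤ n`, `k` is even and `k/2` is a prime power.
Then there exist two `k`-element sets `A, B ⊆ [n]` such that (a) `|A ∩ B| = k/2`, and
(b) `|A ∩ Q_{i,β}|` is odd iff `|B ∩ Q_{i,β}|` is odd, for every channel `β` and round `i`. -/
theorem statement_1 (n b t k : ℕ) (hn : 0 < n) (hb : 0 < b) (hkn : k ≤ n)
    (hke : Even k) (hpp : IsPrimePow (k / 2))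
    (Q : Fin t → Finset (Fin n × Fin b))
    (ht : (t : ℝ) ≤ (k : ℝ) / (2 * b) * Real.logb 2 ((n : ℝ) / k) - ((k : ℝ) + 1) / b) :
    ∃ A ∈ Finset.powersetCard k (Finset.univ : Finset (Fin n)),
      ∃ B ∈ Finset.powersetCard k (Finset.univ : Finset (Fin n)),
        (A ∩ B).card = k / 2 ∧
        ∀ (i : Fin t) (β : Fin b),
          (Odd (A ∩ Qsub (Q i) β).card ↔ Odd (B ∩ Qsub (Q i) β).card) :=
  statement_1_general n b t k hb hke hpp Q ht
end

section
/- Let n, b, k be positive integers with 4 ≤ k ≤ n. Suppose a sequence of queries Q_1, …, Q_t has the wake-up property: for every nonempty set X ⊆ [n] with |X| ≤ k there exist 1 ≤ i ≤ t and 1 ≤ β ≤ b such that |X ∩ Q_{i,β}| = 1. Then t > (k/(4b))·log₂(n/k) − (k+1)/b. (In other words, any deterministic oblivious algorithm waking up a network of n nodes with b channels when at most k nodes are activated simultaneously requires more than (k/(4b))·log₂(n/k) − (k+1)/b time steps.) -/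
/-!
Put `h = ⌊k/2⌋`. For distinct `h`-sets `A ≠ B` of stations, `A ∆ B` is nonempty of size at
most `k`, so some round and channel isolate one of its stations; on that channel `|A ∩ Q|` and
`|B ∩ Q|` have different parities. Hence the parity vectors in `(ZMod 2)^(t × b)` separate all
`h`-sets, so `C(n, h) ≤ 2^(tb)`, and `C(n, h) ≥ (n/k)^h` with `h ≥ k/4`.
-/

open scoped Classical

open Finset
open scoped symmDiff

namespace Finset

variable {α : Type*} [DecidableEq α]

theorem card_symmDiff_add_two_mul_card_inter (s t : Finset α) :
    #(s ∆ t) + 2 * #(s ∩ t) = #s + #t := by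
  rw [symmDiff_eq_sup_sdiff_inf, sup_eq_union, inf_eq_inter,
    card_sdiff_of_subset inter_subset_union, ← card_union_add_card_inter]
  have := card_le_card (inter_subset_union (s := s) (t := t))
  omega

theorem card_symmDiff_inter_zmod_two (s t u : Finset α) :
    (#(s ∆ t ∩ u) : ZMod 2) = #(s ∩ u) + #(t ∩ u) := by
  have h := congrArg (Nat.cast : ℕ → ZMod 2)
    (card_symmDiff_add_two_mul_card_inter (s ∩ u) (t ∩ u))
  push_cast at h
  rwa [show (2 : ZMod 2) = 0 from rfl, zero_mul, add_zero, ← inf_eq_inter, ← inf_eq_inter,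
    ← inf_symmDiff_distrib_right, inf_eq_inter] at h

end Finset

section Selective

variable {α ι : Type*} [DecidableEq α]

def parityVector (F : ι → Finset α) (S : Finset α) : ι → ZMod 2 :=
  fun i => #(S ∩ F i)

theorem parityVector_injOn {F : ι → Finset α} {r : ℕ}
    (hF : ∀ X : Finset α, X.Nonempty → #X ≤ 2 * r → ∃ i, #(X ∩ F i) = 1) :
    Set.InjOn (parityVector F) {S | #S = r} := by
  intro A hA B hB hAB
  by_contra hne
  obtain ⟨i, hi⟩ := hF (A ∆ B) (symmDiff_nonempty.mpr hne) (by
    have := card_symmDiff_add_two_mul_card_inter A B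
    simp only [Set.mem_ofPred_eq] at hA hB
    omega)
  have hpar := card_symmDiff_inter_zmod_two A B (F i)
  rw [hi, show (#(A ∩ F i) : ZMod 2) = #(B ∩ F i) from congrFun hAB i,
    CharTwo.add_self_eq_zero] at hpar
  exact one_ne_zero (by exact_mod_cast hpar)

theorem choose_le_two_pow_of_selective [Fintype α] [Fintype ι] {F : ι → Finset α} {r : ℕ}
    (hF : ∀ X : Finset α, X.Nonempty → #X ≤ 2 * r → ∃ i, #(X ∩ F i) = 1) :
    (Fintype.card α).choose r ≤ 2 ^ Fintype.card ι := by
  calc (Fintype.card α).choose r = #(powersetCard r (univ : Finset α)) := by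
        rw [card_powersetCard, card_univ]
    _ ≤ #(univ : Finset (ι → ZMod 2)) :=
        card_le_card_of_injOn (parityVector F) (fun _ _ => mem_univ _)
          fun A hA B hB =>
            parityVector_injOn hF (mem_powersetCard.mp hA).2 (mem_powersetCard.mp hB).2
    _ = 2 ^ Fintype.card ι := by simp

end Selective

theorem Nat.div_pow_le_choose {m n r : ℕ} (hrm : 2 * r ≤ m) (hmn : m ≤ n) :
    ((n : ℝ) / m) ^ r ≤ n.choose r := by
  rcases r.eq_zero_or_pos with rfl | hr
  · simp
  have hm : (0 : ℝ) < m := by exact_mod_cast (by omega : 0 < m)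
  have hbase : (n : ℝ) / m ≤ ((n + 1 - r : ℕ) : ℝ) / r := by
    rw [Nat.cast_sub (by omega), div_le_div_iff₀ hm (by exact_mod_cast hr)]
    have h1 : (2 * r : ℝ) ≤ m := by exact_mod_cast hrm
    have h2 : (m : ℝ) ≤ n := by exact_mod_cast hmn
    push_cast
    nlinarith
  calc ((n : ℝ) / m) ^ r ≤ (((n + 1 - r : ℕ) : ℝ) / r) ^ r := by gcongr
    _ = ((n + 1 - r : ℕ) : ℝ) ^ r / (r : ℝ) ^ r := div_pow _ _ _
    _ ≤ ((n + 1 - r : ℕ) : ℝ) ^ r / r.factorial := by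
        gcongr
        exact_mod_cast r.factorial_le_pow
    _ ≤ n.choose r := Nat.pow_le_choose r n

theorem mul_logb_div_le_logb_choose {k n : ℕ} (hk : 2 ≤ k) (hkn : k ≤ n) :
    (k : ℝ) / 4 * Real.logb 2 ((n : ℝ) / k) ≤ Real.logb 2 (n.choose (k / 2)) := by
  have hk0 : (0 : ℝ) < k := by exact_mod_cast (by omega : 0 < k)
  have hnk : 1 ≤ (n : ℝ) / k := by
    rw [le_div_iff₀ hk0]
    exact_mod_cast (by omega : 1 * k ≤ n)
  have hhalf : (k : ℝ) / 4 ≤ (k / 2 : ℕ) := by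
    have h1 : (k : ℝ) ≤ 2 * (k / 2 : ℕ) + 1 := by
      exact_mod_cast (by omega : k ≤ 2 * (k / 2) + 1)
    have h2 : (2 : ℝ) ≤ k := by exact_mod_cast hk
    linarith
  calc (k : ℝ) / 4 * Real.logb 2 ((n : ℝ) / k)
      ≤ (k / 2 : ℕ) * Real.logb 2 ((n : ℝ) / k) := by
        gcongr
        exact Real.logb_nonneg one_lt_two hnk
    _ = Real.logb 2 (((n : ℝ) / k) ^ (k / 2)) := (Real.logb_pow _ _ _).symm
    _ ≤ Real.logb 2 (n.choose (k / 2)) :=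
        Real.logb_le_logb_of_le one_lt_two (by positivity)
          (Nat.div_pow_le_choose (Nat.mul_div_le k 2) hkn)

theorem statement_2_general (n b t k : ℕ) (hb : 0 < b) (hk : 4 ≤ k) (hkn : k ≤ n)
    (Q : Fin t → Finset (Fin n × Fin b))
    (hwake : ∀ X : Finset (Fin n), X.Nonempty → X.card ≤ k →
      ∃ (i : Fin t) (β : Fin b), (X ∩ Qsub (Q i) β).card = 1) :
    (k : ℝ) / (4 * b) * Real.logb 2 ((n : ℝ) / k) - ((k : ℝ) + 1) / b < (t : ℝ) := by
  have hcount : n.choose (k / 2) ≤ 2 ^ (t * b) := by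
    simpa using choose_le_two_pow_of_selective (F := fun p : Fin t × Fin b => Qsub (Q p.1) p.2)
      (r := k / 2) fun X hX hXk => by
        obtain ⟨i, β, h⟩ := hwake X hX (by omega)
        exact ⟨(i, β), h⟩
  have hlog : Real.logb 2 (n.choose (k / 2)) ≤ t * b := by
    rw [Real.logb_le_iff_le_rpow one_lt_two (by exact_mod_cast Nat.choose_pos (by omega))]
    exact_mod_cast hcount
  have hmain := (mul_logb_div_le_logb_choose (by omega) hkn).trans hlog
  have hbR : (0 : ℝ) < b := by exact_mod_cast hb
  calc (k : ℝ) / (4 * b) * Real.logb 2 ((n : ℝ) / k) - ((k : ℝ) + 1) / b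
      < (k : ℝ) / (4 * b) * Real.logb 2 ((n : ℝ) / k) := sub_lt_self _ (by positivity)
    _ = (k : ℝ) / 4 * Real.logb 2 ((n : ℝ) / k) / b := by ring
    _ ≤ t := by rwa [div_le_iff₀ hbR]

/-- Lower bound: if a sequence of queries `Q_1, …, Q_t` on `n` stations and `b` channels has
the wake-up property — for every nonempty `X ⊆ [n]` with `|X| ≤ k` there are a round `i` and a
channel `β` with `|X ∩ Q_{i,β}| = 1` — and `4 ≤ k ≤ n`, then
`t > (k/(4b))·log₂(n/k) − (k+1)/b`. -/
theorem statement_2 (n b t k : ℕ) (hn : 0 < n) (hb : 0 < b) (hk : 4 ≤ k) (hkn : k ≤ n)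
    (Q : Fin t → Finset (Fin n × Fin b))
    (hwake : ∀ X : Finset (Fin n), X.Nonempty → X.card ≤ k →
      ∃ (i : Fin t) (β : Fin b), (X ∩ Qsub (Q i) β).card = 1) :
    (k : ℝ) / (4 * b) * Real.logb 2 ((n : ℝ) / k) - ((k : ℝ) + 1) / b < (t : ℝ) :=
  statement_2_general n b t k hb hk hkn Q hwake
end

section
/- Let k ≥ 1 and b ≥ 1 be integers, let 1 ≤ β ≤ b, and let w be an integer with k^{(β−1)/b} ≤ w ≤ k^{β/b}. If each of w stations transmits on channel β independently with probability k^{−β/b}, then the probability that exactly one of them transmits (a successful transmission on channel β) is at least 1/(2e·k^{1/b}); equivalently, w·k^{−β/b}·(1 − k^{−β/b})^{w−1} ≥ 1/(2e·k^{1/b}). -/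
/-!
With `p = k^(-β/b)`, the lower bound on `w` gives `w p ≥ k^(-1/b)` and the upper bound gives
`w p ≤ 1`. The latter forces `1 - p ≥ (w - 1) / w`, so `(1 - p)^(w - 1) ≥ (1 + 1/(w-1))^(-(w-1))
≥ e⁻¹`. Hence `w p (1 - p)^(w - 1) ≥ k^(-1/b) / e`, which is even twice the claimed bound.
-/

open Real

theorem exp_neg_one_le_one_sub_pow {p : ℝ} {n : ℕ} (h : (n + 1) * p ≤ 1) :
    exp (-1) ≤ (1 - p) ^ n := by
  rcases n.eq_zero_or_pos with rfl | hn
  · simp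
  have hn' : (0 : ℝ) < n := by exact_mod_cast hn
  have hp : (1 + (n : ℝ)⁻¹)⁻¹ ≤ 1 - p := by
    rw [inv_le_iff_one_le_mul₀ (by positivity)]
    field_simp
    nlinarith
  calc exp (-1) = (exp 1)⁻¹ := exp_neg 1
    _ ≤ ((1 + (n : ℝ)⁻¹) ^ n)⁻¹ := inv_anti₀ (by positivity) one_add_inv_pow_le_exp
    _ = (1 + (n : ℝ)⁻¹)⁻¹ ^ n := (inv_pow _ _).symm
    _ ≤ (1 - p) ^ n := pow_le_pow_left₀ (by positivity) hp n

theorem mul_exp_neg_one_le_mul_one_sub_pow {p : ℝ} {w : ℕ} (hp : 0 ≤ p) (hwp : w * p ≤ 1) :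
    w * p * exp (-1) ≤ w * p * (1 - p) ^ (w - 1) := by
  rcases w.eq_zero_or_pos with rfl | hw
  · simp
  refine mul_le_mul_of_nonneg_left (exp_neg_one_le_one_sub_pow ?_) (by positivity)
  rwa [← Nat.cast_add_one, Nat.sub_add_cancel hw]

theorem statement_3_general (k b : ℕ) (hk : 1 ≤ k)
    (β : ℕ)
    (w : ℕ) (hw1 : (k : ℝ) ^ (((β : ℝ) - 1) / b) ≤ (w : ℝ))
    (hw2 : (w : ℝ) ≤ (k : ℝ) ^ ((β : ℝ) / b)) :
    1 / (2 * Real.exp 1 * (k : ℝ) ^ ((1 : ℝ) / b)) ≤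
      (w : ℝ) * (k : ℝ) ^ (-(β : ℝ) / b) *
        (1 - (k : ℝ) ^ (-(β : ℝ) / b)) ^ (w - 1) := by
  have hk0 : (0 : ℝ) < k := by exact_mod_cast hk
  set p := (k : ℝ) ^ (-(β : ℝ) / b)
  have hp : 0 < p := rpow_pos_of_pos hk0 _
  have hwp_lower : (k : ℝ) ^ (-(1 : ℝ) / b) ≤ w * p :=
    calc (k : ℝ) ^ (-(1 : ℝ) / b) = (k : ℝ) ^ (((β : ℝ) - 1) / b) * p := by
          rw [← rpow_add hk0]; ring_nf
      _ ≤ w * p := mul_le_mul_of_nonneg_right hw1 hp.le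
  have hwp_upper : w * p ≤ 1 := by
    rwa [← le_div_iff₀ hp, one_div, ← rpow_neg hk0.le, neg_div, neg_neg]
  calc 1 / (2 * exp 1 * (k : ℝ) ^ ((1 : ℝ) / b))
      ≤ (k : ℝ) ^ (-(1 : ℝ) / b) * exp (-1) := by
        rw [neg_div, rpow_neg hk0.le, exp_neg, div_le_iff₀ (by positivity)]
        field_simp
        norm_num
    _ ≤ w * p * exp (-1) := by gcongr
    _ ≤ w * p * (1 - p) ^ (w - 1) := mul_exp_neg_one_le_mul_one_sub_pow hp.le hwp_upper

/-- Let `k ≥ 1`, `b ≥ 1`, `1 ≤ β ≤ b`, and let `w` be an integer with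
`k^((β−1)/b) ≤ w ≤ k^(β/b)`.  If each of `w` stations transmits on channel `β` independently
with probability `k^(−β/b)`, then the probability that exactly one of them transmits is at
least `1/(2e·k^(1/b))`; equivalently,
`w·k^(−β/b)·(1 − k^(−β/b))^(w−1) ≥ 1/(2e·k^(1/b))`. -/
theorem statement_3 (k b : ℕ) (hk : 1 ≤ k) (hb : 1 ≤ b)
    (β : ℕ) (hβ1 : 1 ≤ β) (hβb : β ≤ b)
    (w : ℕ) (hw1 : (k : ℝ) ^ (((β : ℝ) - 1) / b) ≤ (w : ℝ))
    (hw2 : (w : ℝ) ≤ (k : ℝ) ^ ((β : ℝ) / b)) :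
    1 / (2 * Real.exp 1 * (k : ℝ) ^ ((1 : ℝ) / b)) ≤
      (w : ℝ) * (k : ℝ) ^ (-(β : ℝ) / b) *
        (1 - (k : ℝ) ^ (-(β : ℝ) / b)) ^ (w - 1) :=
  statement_3_general k b hk β w hw1 hw2
end

section
/- Consider n stations and b channels with at most k stations activated, k known. Each station, starting from its activation, in every round transmits on each channel β ∈ {1,…,b} independently with probability k^{−β/b} (algorithm Channel-Screening). Let 0 < ε < 1 and let λ be an integer with λ ≥ 2e·k^{1/b}·ln(1/ε). For any activation pattern in which at every time step among the first λ time steps after the first activation the number of active stations W(t) satisfies 1 ≤ |W(t)| ≤ k, the probability that there exist a time step t among these λ time steps and a channel β on which exactly one active station transmits is at least 1 − ε. -/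
/-! Let `x = k^(1/b)`. In a round with active set `W`, `1 ≤ |W| ≤ k = x^b`, so some channel `j`
has `x^j ≤ |W| ≤ x^(j+1)`; its transmission probability `p = x^(-(j+1))` gives `1/x ≤ |W| p ≤ 1`,
and exactly one station of `W` transmits on it with probability
`|W| p (1-p)^(|W|-1) ≥ |W| p / e ≥ 1/(e x)`. Rounds are independent, so all `λ` rounds fail with
probability at most `(1 - 1/(e x))^λ ≤ exp(-λ/(e x)) ≤ ε`. -/

open scoped Classical

/-- The probability, under independent Bernoulli bits indexed by `ι` where bit `i` equals
`true` with probability `q i`, of the event `E` of bit-configurations. -/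
noncomputable def bprob {ι : Type} [Fintype ι] [DecidableEq ι]
    (q : ι → ℝ) (E : (ι → Bool) → Prop) : ℝ :=
  ∑ f : ι → Bool, if E f then (∏ i, if f i then q i else 1 - q i) else 0

/-- `Wact σ t` is the set `W(t)` of stations active at time step `t`, for activation
pattern `σ` (`σ u = ⊤` means `u` is never activated). -/
noncomputable def Wact (n : ℕ) (σ : Fin n → ℕ∞) (t : ℕ) : Finset (Fin n) :=
  Finset.univ.filter fun u => σ u ≤ (t : ℕ∞)

/-- The time step of the first spontaneous activation under activation pattern `σ`. -/
noncomputable def firstAct (n : ℕ) (σ : Fin n → ℕ∞) : ℕ :=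
  sInf {t : ℕ | ∃ u, σ u = (t : ℕ∞)}

section bprob

variable {ι : Type} [Fintype ι] {q : ι → ℝ}

noncomputable def bprobWeight (q : ι → ℝ) (f : ι → Bool) : ℝ :=
  ∏ i, if f i then q i else 1 - q i

theorem bprobWeight_nonneg (hq : ∀ i, q i ∈ Set.Icc (0 : ℝ) 1) (f : ι → Bool) :
    0 ≤ bprobWeight q f :=
  Finset.prod_nonneg fun i _ => by
    obtain ⟨h0, h1⟩ := hq i
    split <;> linarith

variable [DecidableEq ι]

theorem bprob_nonneg (hq : ∀ i, q i ∈ Set.Icc (0 : ℝ) 1) (E : (ι → Bool) → Prop) :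
    0 ≤ bprob q E :=
  Finset.sum_nonneg fun f _ => by
    split
    · exact bprobWeight_nonneg hq f
    · exact le_rfl

theorem bprob_mono (hq : ∀ i, q i ∈ Set.Icc (0 : ℝ) 1) {E F : (ι → Bool) → Prop}
    (h : ∀ f, E f → F f) : bprob q E ≤ bprob q F := by
  refine Finset.sum_le_sum fun f _ => ?_
  by_cases hE : E f
  · simp [hE, h f hE]
  · simp only [hE, if_false]
    split
    · exact bprobWeight_nonneg hq f
    · exact le_rfl

theorem bprob_forall_mem (q : ι → ℝ) (A : ι → Finset Bool) :
    bprob q (fun f => ∀ i, f i ∈ A i) = ∏ i, ∑ c ∈ A i, if c then q i else 1 - q i := by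
  have hA : Fintype.piFinset A = Finset.univ.filter fun f => ∀ i, f i ∈ A i := by
    ext f
    simp [Fintype.mem_piFinset]
  rw [Finset.prod_univ_sum, hA, Finset.sum_filter, bprob]
  congr!

theorem bprob_true (q : ι → ℝ) : bprob q (fun _ => True) = 1 := by
  simpa using bprob_forall_mem q (fun _ => Finset.univ)

theorem bprob_not (q : ι → ℝ) (E : (ι → Bool) → Prop) :
    bprob q (fun f => ¬ E f) = 1 - bprob q E := by
  rw [← bprob_true q, eq_sub_iff_add_eq]
  simp only [bprob, ← Finset.sum_add_distrib]
  refine Finset.sum_congr rfl fun f _ => ?_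
  by_cases h : E f <;> simp [h]

theorem bprob_forall_mem_eq (q : ι → ℝ) (S : Finset ι) (g : ι → Bool) :
    bprob q (fun f => ∀ i ∈ S, f i = g i) = ∏ i ∈ S, if g i then q i else 1 - q i := by
  calc bprob q (fun f => ∀ i ∈ S, f i = g i)
      = bprob q (fun f => ∀ i, f i ∈ if i ∈ S then {g i} else Finset.univ) := by
        congr 1
        ext f
        refine forall_congr' fun i => ?_
        split <;> simp [*]
    _ = ∏ i, if i ∈ S then (if g i then q i else 1 - q i) else 1 := by
        rw [bprob_forall_mem]
        refine Finset.prod_congr rfl fun i _ => ?_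
        split <;> simp
    _ = ∏ i ∈ S, if g i then q i else 1 - q i := by
        rw [Finset.prod_ite_mem, Finset.univ_inter]

theorem sum_bprob_le_bprob (hq : ∀ i, q i ∈ Set.Icc (0 : ℝ) 1) {κ : Type} (s : Finset κ)
    {E : κ → (ι → Bool) → Prop} {F : (ι → Bool) → Prop}
    (hdisj : ∀ f, ∀ a ∈ s, ∀ a' ∈ s, E a f → E a' f → a = a')
    (hEF : ∀ a ∈ s, ∀ f, E a f → F f) :
    ∑ a ∈ s, bprob q (E a) ≤ bprob q F := by
  simp only [bprob]
  rw [Finset.sum_comm]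
  refine Finset.sum_le_sum fun f _ => ?_
  rw [← Finset.sum_filter, Finset.sum_const, nsmul_eq_mul]
  by_cases hF : F f
  · have hcard : (s.filter (E · f)).card ≤ 1 :=
      Finset.card_le_one.2 fun a ha a' ha' => by
        simp only [Finset.mem_filter] at ha ha'
        exact hdisj f a ha.1 a' ha'.1 ha.2 ha'.2
    rw [if_pos hF]
    exact mul_le_of_le_one_left (bprobWeight_nonneg hq f) (by exact_mod_cast hcard)
  · have hempty : s.filter (E · f) = ∅ :=
      Finset.filter_eq_empty_iff.2 fun a ha hE => hF (hEF a ha f hE)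
    simp [hempty, hF]

theorem bprob_equiv {κ : Type} [Fintype κ] [DecidableEq κ] (e : κ ≃ ι) (q : ι → ℝ)
    (E : (ι → Bool) → Prop) :
    bprob q E = bprob (q ∘ e) (fun f => E (f ∘ e.symm)) := by
  refine Fintype.sum_equiv (e.arrowCongr (Equiv.refl Bool)).symm _ _ fun f => ?_
  have hf : (e.arrowCongr (Equiv.refl Bool)).symm f ∘ e.symm = f := by
    ext i
    simp [Equiv.arrowCongr_apply]
  beta_reduce
  rw [hf, ← e.prod_comp]
  rfl

theorem bprob_forall_prod {α γ : Type} [Fintype α] [Fintype γ] [DecidableEq α] [DecidableEq γ]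
    (q : α → γ → ℝ) (E : α → (γ → Bool) → Prop) :
    bprob (fun x => q x.1 x.2) (fun f => ∀ a, E a (fun c => f (a, c))) =
      ∏ a, bprob (q a) (E a) := by
  simp only [bprob]
  rw [Finset.prod_univ_sum, Fintype.piFinset_univ]
  refine Fintype.sum_equiv (Equiv.curry α γ Bool) _ _ fun f => ?_
  by_cases H : ∀ a, E a (fun c => f (a, c))
  · rw [if_pos H, Fintype.prod_prod_type]
    exact (Finset.prod_congr rfl fun a _ => if_pos (H a)).symm
  · obtain ⟨a, ha⟩ := not_forall.1 H
    rw [if_neg H]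
    exact (Finset.prod_eq_zero (Finset.mem_univ a) (if_neg ha)).symm

theorem card_mul_le_bprob_card_filter_eq_one (hq : ∀ i, q i ∈ Set.Icc (0 : ℝ) 1)
    {σ : Type} {W : Finset σ} {e : σ → ι} (he : Function.Injective e) {p : ℝ}
    (hp : ∀ u ∈ W, q (e u) = p) :
    W.card * (p * (1 - p) ^ (W.card - 1)) ≤
      bprob q (fun f => (W.filter fun u => f (e u) = true).card = 1) := by
  let onlyAt (u : σ) (f : ι → Bool) : Prop := ∀ x ∈ W.image e, f x = decide (x = e u)
  have honlyAt : ∀ u ∈ W, bprob q (onlyAt u) = p * (1 - p) ^ (W.card - 1) := by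
    intro u hu
    rw [bprob_forall_mem_eq, Finset.prod_image he.injOn, ← Finset.mul_prod_erase W _ hu]
    simp only [decide_true, if_true, hp u hu]
    congr 1
    rw [← Finset.card_erase_of_mem hu, ← Finset.prod_const]
    refine Finset.prod_congr rfl fun v hv => ?_
    simp [he.ne (Finset.ne_of_mem_erase hv), hp v (Finset.mem_of_mem_erase hv)]
  calc W.card * (p * (1 - p) ^ (W.card - 1)) = ∑ u ∈ W, bprob q (onlyAt u) := by
        rw [Finset.sum_congr rfl honlyAt, Finset.sum_const, nsmul_eq_mul]
    _ ≤ _ := by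
        refine sum_bprob_le_bprob hq W (fun f u hu u' hu' h h' => ?_) fun u hu f h => ?_
        · have := h' (e u) (Finset.mem_image_of_mem e hu)
          rw [h (e u) (Finset.mem_image_of_mem e hu)] at this
          simpa [he.eq_iff] using this
        · rw [Finset.card_eq_one]
          refine ⟨u, Finset.ext fun v => ?_⟩
          simp only [Finset.mem_filter, Finset.mem_singleton]
          constructor
          · rintro ⟨hv, hfv⟩
            simpa [he.eq_iff, h (e v) (Finset.mem_image_of_mem e hv)] using hfv
          · rintro rfl
            exact ⟨hu, by simpa using h (e v) (Finset.mem_image_of_mem e hu)⟩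

end bprob

theorem inv_exp_one_le_one_sub_pow {p : ℝ} {m : ℕ} (hmp : m * p ≤ 1) :
    (Real.exp 1)⁻¹ ≤ (1 - p) ^ (m - 1) := by
  rcases Nat.lt_or_ge m 2 with hm | hm
  · rw [Nat.sub_eq_zero_of_le (by omega), pow_zero]
    exact inv_le_one_of_one_le₀ (Real.one_le_exp zero_le_one)
  have hm2 : (2 : ℝ) ≤ m := by exact_mod_cast hm
  have hp1 : 0 < 1 - p := by nlinarith
  have hlog : 1 - (1 - p)⁻¹ ≤ Real.log (1 - p) := Real.one_sub_inv_le_log_of_pos hp1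
  have hcast : ((m - 1 : ℕ) : ℝ) = m - 1 := by rw [Nat.cast_sub (by omega), Nat.cast_one]
  have hkey : -1 ≤ ((m - 1 : ℕ) : ℝ) * Real.log (1 - p) := by
    have h1 : 1 - (1 - p)⁻¹ = -(p / (1 - p)) := by field_simp; ring
    have h2 : ((m : ℝ) - 1) * (p / (1 - p)) ≤ 1 := by
      rw [← mul_div_assoc, div_le_one hp1]
      linarith
    rw [hcast]
    nlinarith
  calc (Real.exp 1)⁻¹ = Real.exp (-1) := (Real.exp_neg 1).symm
    _ ≤ Real.exp (((m - 1 : ℕ) : ℝ) * Real.log (1 - p)) := Real.exp_le_exp.2 hkey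
    _ = (1 - p) ^ (m - 1) := by rw [Real.exp_nat_mul, Real.exp_log hp1]

theorem one_sub_inv_pow_le {a ε : ℝ} {n : ℕ} (ha : 1 ≤ a) (hε : 0 < ε)
    (hn : a * Real.log (1 / ε) ≤ n) : (1 - a⁻¹) ^ n ≤ ε := by
  have ha0 : 0 < a := by linarith
  calc (1 - a⁻¹) ^ n ≤ Real.exp (-a⁻¹) ^ n :=
        pow_le_pow_left₀ (by simpa using inv_le_one_of_one_le₀ ha) (Real.one_sub_le_exp_neg _) n
    _ = Real.exp (-(n / a)) := by rw [← Real.exp_nat_mul]; ring_nf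
    _ ≤ Real.exp (Real.log ε) := by
        rw [one_div, Real.log_inv, ← le_div_iff₀' ha0] at hn
        exact Real.exp_le_exp.2 (by linarith)
    _ = ε := Real.exp_log hε

theorem exists_pow_le_le_pow_succ {x y : ℝ} {b : ℕ} (hb : 0 < b) (hy : 1 ≤ y)
    (hyx : y ≤ x ^ b) :
    ∃ j < b, x ^ j ≤ y ∧ y ≤ x ^ (j + 1) := by
  classical
  have hex : ∃ j, y ≤ x ^ (j + 1) := ⟨b - 1, by rwa [Nat.sub_add_cancel hb]⟩
  refine ⟨Nat.find hex, ?_, ?_, Nat.find_spec hex⟩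
  · have := Nat.find_min' hex (m := b - 1) (by rwa [Nat.sub_add_cancel hb])
    omega
  · rcases h : Nat.find hex with _ | j
    · simpa using hy
    · exact (not_le.1 (Nat.find_min hex (h ▸ Nat.lt_succ_self j))).le

-- Channels are indexed from `0`: channel `β : Fin b` is the paper's channel `β + 1`.
noncomputable def screeningProb (k b : ℕ) (β : Fin b) : ℝ :=
  (k : ℝ) ^ (-(((β : ℕ) : ℝ) + 1) / b)

theorem screeningProb_eq_inv_pow (k b : ℕ) (β : Fin b) :
    screeningProb k b β = (((k : ℝ) ^ ((1 : ℝ) / b)) ^ ((β : ℕ) + 1))⁻¹ := by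
  rw [screeningProb, ← Real.rpow_natCast, ← Real.rpow_mul k.cast_nonneg,
    ← Real.rpow_neg k.cast_nonneg]
  push_cast
  ring_nf

theorem one_le_rpow_one_div {k : ℕ} (hk : 1 ≤ k) (b : ℕ) :
    1 ≤ (k : ℝ) ^ ((1 : ℝ) / b) :=
  Real.one_le_rpow (by exact_mod_cast hk) (by positivity)

theorem screeningProb_mem_Icc {k : ℕ} (hk : 1 ≤ k) (b : ℕ) (β : Fin b) :
    screeningProb k b β ∈ Set.Icc (0 : ℝ) 1 := by
  rw [screeningProb_eq_inv_pow]
  exact ⟨by positivity, inv_le_one_of_one_le₀ (one_le_pow₀ (one_le_rpow_one_div hk b))⟩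

def WakesUp {σ : Type} {b : ℕ} (W : Finset σ) (g : σ × Fin b → Bool) : Prop :=
  ∃ β : Fin b, (W.filter fun u => g (u, β) = true).card = 1

theorem inv_exp_mul_rpow_le_bprob_wakesUp {σ : Type} [Fintype σ] [DecidableEq σ] {b k : ℕ}
    (hb : 0 < b) (hk : 1 ≤ k) {W : Finset σ} (hW : 1 ≤ W.card) (hWk : W.card ≤ k) :
    (Real.exp 1 * (k : ℝ) ^ ((1 : ℝ) / b))⁻¹ ≤
      bprob (fun x : σ × Fin b => screeningProb k b x.2) (WakesUp W) := by
  set x : ℝ := (k : ℝ) ^ ((1 : ℝ) / b)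
  have hx : 1 ≤ x := one_le_rpow_one_div hk b
  have hx0 : 0 < x := by linarith
  have hxb : x ^ b = k := by
    rw [← Real.rpow_natCast, ← Real.rpow_mul k.cast_nonneg, one_div_mul_cancel (by positivity),
      Real.rpow_one]
  have hq : ∀ y : σ × Fin b, screeningProb k b y.2 ∈ Set.Icc (0 : ℝ) 1 :=
    fun y => screeningProb_mem_Icc hk b y.2
  obtain ⟨j, hjb, hlo, hhi⟩ := exists_pow_le_le_pow_succ hb (y := W.card)
    (by exact_mod_cast hW) (by rw [hxb]; exact_mod_cast hWk)
  set β : Fin b := ⟨j, hjb⟩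
  set p : ℝ := (x ^ (j + 1))⁻¹
  have hmp : W.card * p ≤ 1 := by
    rw [← div_eq_mul_inv, div_le_one (by positivity)]
    exact hhi
  have hlow : x⁻¹ ≤ W.card * p :=
    calc x⁻¹ = x ^ j * p := by simp only [p]; field_simp; ring
      _ ≤ W.card * p := mul_le_mul_of_nonneg_right hlo (by positivity)
  have hpow := inv_exp_one_le_one_sub_pow hmp
  calc (Real.exp 1 * x)⁻¹ ≤ (1 - p) ^ (W.card - 1) * (W.card * p) := by
        rw [mul_inv]
        exact mul_le_mul hpow hlow (by positivity) ((by positivity : (0 : ℝ) ≤ _).trans hpow)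
    _ = W.card * (p * (1 - p) ^ (W.card - 1)) := by ring
    _ ≤ bprob _ (fun g => (W.filter fun u => g (u, β) = true).card = 1) :=
        card_mul_le_bprob_card_filter_eq_one hq (e := fun u => (u, β))
          (fun u v h => (Prod.ext_iff.1 h).1) fun u _ => screeningProb_eq_inv_pow k b β
    _ ≤ bprob _ (WakesUp W) := bprob_mono hq fun g h => ⟨β, h⟩

theorem statement_4_general (n b k : ℕ) (hb : 0 < b) (hk : 1 ≤ k)
    (ε : ℝ) (hε0 : 0 < ε) (hε1 : ε < 1)
    (lam : ℕ)
    (hlam : 2 * Real.exp 1 * (k : ℝ) ^ ((1 : ℝ) / b) * Real.log (1 / ε) ≤ (lam : ℝ))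
    (σ : Fin n → ℕ∞)
    (hW : ∀ t : ℕ, firstAct n σ ≤ t → t < firstAct n σ + lam →
      1 ≤ (Wact n σ t).card ∧ (Wact n σ t).card ≤ k) :
    1 - ε ≤
      bprob (fun x : Fin n × Fin b × Fin lam => (k : ℝ) ^ (-(((x.2.1 : ℕ) : ℝ) + 1) / b))
        (fun f => ∃ (j : Fin lam) (β : Fin b),
          ((Wact n σ (firstAct n σ + (j : ℕ))).filter fun u => f (u, β, j) = true).card = 1) := by
  set W : ℕ → Finset (Fin n) := fun j => Wact n σ (firstAct n σ + j)
  set a : ℝ := Real.exp 1 * (k : ℝ) ^ ((1 : ℝ) / b)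
  have ha : 1 ≤ a := one_le_mul_of_one_le_of_one_le (Real.one_le_exp zero_le_one)
    (one_le_rpow_one_div hk b)
  have hround (j : Fin lam) :
      bprob (fun y : Fin n × Fin b => screeningProb k b y.2) (fun g => ¬ WakesUp (W j) g) ≤
        1 - a⁻¹ := by
    obtain ⟨hW1, hWk⟩ := hW (firstAct n σ + j) (Nat.le_add_right _ _) (by omega)
    rw [bprob_not]
    linarith [inv_exp_mul_rpow_le_bprob_wakesUp hb hk hW1 hWk]
  have hlam' : a * Real.log (1 / ε) ≤ lam := by
    have hL : 0 < Real.log (1 / ε) := Real.log_pos (one_lt_one_div hε0 hε1)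
    nlinarith
  rw [sub_le_comm, ← bprob_not]
  calc _ = bprob (fun x : Fin n × Fin b × Fin lam => screeningProb k b x.2.1)
        (fun f => ∀ j : Fin lam, ¬ WakesUp (W j) (fun y => f (y.1, y.2, j))) := by
        simp only [WakesUp, not_exists]
        rfl
    _ = ∏ j : Fin lam, bprob (fun y : Fin n × Fin b => screeningProb k b y.2)
          (fun g => ¬ WakesUp (W j) g) := by
        rw [bprob_equiv ((Equiv.prodComm _ _).trans (Equiv.prodAssoc _ _ _)),
          ← bprob_forall_prod]
        rfl
    _ ≤ ∏ _j : Fin lam, (1 - a⁻¹) :=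
        Finset.prod_le_prod (fun j _ => bprob_nonneg (fun y => screeningProb_mem_Icc hk b _) _)
          fun j _ => hround j
    _ = (1 - a⁻¹) ^ lam := by simp
    _ ≤ ε := one_sub_inv_pow_le ha hε0 hlam'

/-- Algorithm Channel-Screening: with `n` stations, `b` channels, at most `k` stations
activated (`k` known), every active station in every round transmits on each channel
`β ∈ {1,…,b}` independently with probability `k^(−β/b)`.  If `0 < ε < 1` and
`λ ≥ 2e·k^(1/b)·ln(1/ε)`, then for any activation pattern in which at each of the first `λ`
time steps after the first activation the set of active stations `W(t)` satisfies
`1 ≤ |W(t)| ≤ k`, the probability that at some of these `λ` time steps exactly one active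
station transmits on some channel is at least `1 − ε`. -/
theorem statement_4 (n b k : ℕ) (hn : 0 < n) (hb : 0 < b) (hk : 1 ≤ k) (hkn : k ≤ n)
    (ε : ℝ) (hε0 : 0 < ε) (hε1 : ε < 1)
    (lam : ℕ)
    (hlam : 2 * Real.exp 1 * (k : ℝ) ^ ((1 : ℝ) / b) * Real.log (1 / ε) ≤ (lam : ℝ))
    (σ : Fin n → ℕ∞) (hact : ∃ u, σ u ≠ ⊤)
    (hW : ∀ t : ℕ, firstAct n σ ≤ t → t < firstAct n σ + lam →
      1 ≤ (Wact n σ t).card ∧ (Wact n σ t).card ≤ k) :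
    1 - ε ≤
      bprob (fun x : Fin n × Fin b × Fin lam => (k : ℝ) ^ (-(((x.2.1 : ℕ) : ℝ) + 1) / b))
        (fun f => ∃ (j : Fin lam) (β : Fin b),
          ((Wact n σ (firstAct n σ + (j : ℕ))).filter fun u => f (u, β, j) = true).card = 1) :=
  statement_4_general n b k hb hk ε hε0 hε1 lam hlam σ hW
end

section
/- Suppose at most k ≤ n stations are ever activated. Suppose [t₁,t₂] is an interval of size φ(ω−1), for some 1 ≤ ω ≤ log₂ k, such that for every time step j ∈ [t₁,t₂]: (a') |W_ω(j)| ≥ 2^ω, and (b') |W_i(j)| = 0 for every i > ω. Then there exists an ω'-balanced interval for some ω ≤ ω' ≤ log₂ k. -/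
open scoped Classical

/-- `phi c n b i = ⌈c·2^i·i^(1/b)·log₂ n⌉` for `i ≥ 1`, and `phi c n b 0 = 0`. -/
noncomputable def phi (c : ℝ) (n b i : ℕ) : ℕ :=
  if i = 0 then 0 else ⌈c * 2 ^ i * (i : ℝ) ^ ((1 : ℝ) / b) * Real.logb 2 n⌉₊

/-- `gam c n b 0 = 0` and `gam c n b i = phi c n b (i+1)` for `i ≥ 1` (the `γ_i`). -/
noncomputable def gam (c : ℝ) (n b i : ℕ) : ℕ :=
  if i = 0 then 0 else phi c n b (i + 1)

/-- `Wstage c n b σ i j` is the set `W_i(j)` of stations in stage `i` at time step `j`: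
those stations `u` with `σ_u + γ_(i−1) ≤ j ≤ σ_u + γ_i − 1`. -/
noncomputable def Wstage (c : ℝ) (n b : ℕ) (σ : Fin n → ℕ∞) (i j : ℕ) : Finset (Fin n) :=
  Finset.univ.filter fun u =>
    σ u + (gam c n b (i - 1) : ℕ∞) ≤ (j : ℕ∞) ∧ (j : ℕ∞) < σ u + (gam c n b i : ℕ∞)

/-- A time step `j` is `ω`-balanced when `2^ω ≤ |W_ω(j)| ≤ 2^(ω+2)` and `|W_i(j)| = 0` for
every `i > ω`. -/
def balancedStep (c : ℝ) (n b : ℕ) (σ : Fin n → ℕ∞) (ω j : ℕ) : Prop :=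
  2 ^ ω ≤ (Wstage c n b σ ω j).card ∧ (Wstage c n b σ ω j).card ≤ 2 ^ (ω + 2) ∧
    ∀ i, ω < i → (Wstage c n b σ i j).card = 0

/-- An interval `[t₁,t₂]` of size `phi c n b (ω−1)` is `ω`-balanced when all its time steps
are `ω`-balanced. -/
def balancedInterval (c : ℝ) (n b : ℕ) (σ : Fin n → ℕ∞) (ω t₁ t₂ : ℕ) : Prop :=
  t₂ + 1 = t₁ + phi c n b (ω - 1) ∧ ∀ j ∈ Finset.Icc t₁ t₂, balancedStep c n b σ ω j

/-- `Psi c n b k σ j = Σ_{i=1}^{log₂ k} |W_i(j)|/2^i`. -/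
noncomputable def Psi (c : ℝ) (n b k : ℕ) (σ : Fin n → ℕ∞) (j : ℕ) : ℝ :=
  ∑ i ∈ Finset.Icc 1 (Nat.log 2 k), ((Wstage c n b σ i j).card : ℝ) / 2 ^ i

/-- An `ω`-balanced interval `[t₁,t₂]` is `ω`-light when (1) `|⋃_{i=1}^{ω} W_i(j)| ≤ 2^(ω+4)`
for every `j ∈ [t₁,t₂]`, and (2) `[t₁,t₂]` contains at least `phi c n b (ω−2)` time steps `j`
with `1 ≤ Ψ(j) ≤ 128·ω`. -/
def lightInterval (c : ℝ) (n b k : ℕ) (σ : Fin n → ℕ∞) (ω t₁ t₂ : ℕ) : Prop :=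
  balancedInterval c n b σ ω t₁ t₂ ∧
    (∀ j ∈ Finset.Icc t₁ t₂,
      ((Finset.Icc 1 ω).biUnion fun i => Wstage c n b σ i j).card ≤ 2 ^ (ω + 4)) ∧
    phi c n b (ω - 2) ≤ ((Finset.Icc t₁ t₂).filter fun j =>
      1 ≤ Psi c n b k σ j ∧ Psi c n b k σ j ≤ 128 * (ω : ℝ)).card

/-!
If some step `j₀` of a semibalanced interval at level `ω` carries more than `2^(ω+2)` stations in
stage `ω`, all of them sit in stage `ω+1` throughout a window of length `φ(ω)` starting
`φ(ω+1) − φ(ω)` steps after `j₀`, because `φ` at least doubles from one level to the next. Nobody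
is beyond stage `ω+1` in that window either, since such a station would already be beyond stage
`ω` at the end of the old interval. So the window is semibalanced at level `ω+1`. The levels
cannot climb past `log₂ k`, as a stage never holds more than the `k` activated stations; the
first level at which no step overflows gives a balanced interval.
-/

open Finset

/-- Hypotheses (a') and (b') on an interval `[t₁,t₂]` of size `φ(ω−1)`. -/
def semibalancedInterval (c : ℝ) (n b : ℕ) (σ : Fin n → ℕ∞) (ω t₁ t₂ : ℕ) : Prop :=
  t₂ + 1 = t₁ + phi c n b (ω - 1) ∧ ∀ j ∈ Icc t₁ t₂,
    2 ^ ω ≤ (Wstage c n b σ ω j).card ∧ ∀ i, ω < i → (Wstage c n b σ i j).card = 0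

section Phi

variable {c : ℝ} {n b : ℕ}

@[simp]
lemma phi_zero : phi c n b 0 = 0 := rfl

lemma phi_of_ne_zero {i : ℕ} (hi : i ≠ 0) :
    phi c n b i = ⌈c * 2 ^ i * (i : ℝ) ^ ((1 : ℝ) / b) * Real.logb 2 n⌉₊ := if_neg hi

lemma logb_two_natCast_nonneg (n : ℕ) : 0 ≤ Real.logb 2 n :=
  div_nonneg (Real.log_natCast_nonneg n) (Real.log_nonneg one_le_two)

lemma rpow_one_div_natCast_le_succ (i b : ℕ) :
    (i : ℝ) ^ ((1 : ℝ) / b) ≤ ((i + 1 : ℕ) : ℝ) ^ ((1 : ℝ) / b) :=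
  Real.rpow_le_rpow (Nat.cast_nonneg i) (by exact_mod_cast i.le_succ) (by positivity)

lemma phi_monotone (hc : 0 ≤ c) : Monotone (phi c n b) := by
  refine monotone_nat_of_le_succ fun i => ?_
  obtain rfl | hi := eq_or_ne i 0
  · simp
  rw [phi_of_ne_zero hi, phi_of_ne_zero i.succ_ne_zero]
  have := logb_two_natCast_nonneg n
  have := rpow_one_div_natCast_le_succ i b
  gcongr
  · exact one_le_two
  · exact i.le_succ

lemma two_mul_phi_le_phi_succ_add_one (hc : 0 ≤ c) (i : ℕ) :
    2 * phi c n b i ≤ phi c n b (i + 1) + 1 := by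
  obtain rfl | hi := eq_or_ne i 0
  · simp
  rw [phi_of_ne_zero hi, phi_of_ne_zero i.succ_ne_zero]
  set x := c * 2 ^ i * (i : ℝ) ^ ((1 : ℝ) / b) * Real.logb 2 n
  set y := c * 2 ^ (i + 1) * ((i + 1 : ℕ) : ℝ) ^ ((1 : ℝ) / b) * Real.logb 2 n
  have hL := logb_two_natCast_nonneg n
  have hx : 0 ≤ x := by positivity
  have hxy : 2 * x ≤ y := by
    have := rpow_one_div_natCast_le_succ i b
    calc 2 * x = c * 2 ^ (i + 1) * (i : ℝ) ^ ((1 : ℝ) / b) * Real.logb 2 n := by ring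
      _ ≤ c * 2 ^ (i + 1) * ((i + 1 : ℕ) : ℝ) ^ ((1 : ℝ) / b) * Real.logb 2 n := by gcongr
  have hceil : (2 * ⌈x⌉₊ : ℝ) < ⌈y⌉₊ + 2 := by
    linarith [Nat.ceil_lt_add_one hx, Nat.le_ceil y]
  have : 2 * ⌈x⌉₊ < ⌈y⌉₊ + 2 := by exact_mod_cast hceil
  omega

@[simp]
lemma gam_zero : gam c n b 0 = 0 := rfl

lemma gam_of_ne_zero {i : ℕ} (hi : i ≠ 0) : gam c n b i = phi c n b (i + 1) := if_neg hi

lemma gam_monotone (hc : 0 ≤ c) : Monotone (gam c n b) := by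
  refine monotone_nat_of_le_succ fun i => ?_
  obtain rfl | hi := eq_or_ne i 0
  · exact Nat.zero_le _
  rw [gam_of_ne_zero hi, gam_of_ne_zero i.succ_ne_zero]
  exact phi_monotone hc i.succ.le_succ

lemma two_mul_gam_le_gam_succ_add_one (hc : 0 ≤ c) (i : ℕ) :
    2 * gam c n b i ≤ gam c n b (i + 1) + 1 := by
  obtain rfl | hi := eq_or_ne i 0
  · simp
  rw [gam_of_ne_zero hi, gam_of_ne_zero i.succ_ne_zero]
  exact two_mul_phi_le_phi_succ_add_one hc (i + 1)

end Phi

section Stages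

variable {c : ℝ} {n b : ℕ} {σ : Fin n → ℕ∞} {u : Fin n}

lemma ne_top_of_mem_Wstage {i j : ℕ} (hu : u ∈ Wstage c n b σ i j) : σ u ≠ ⊤ := by
  intro htop
  have := (mem_filter.mp hu).2.1
  simp [htop] at this

lemma mem_Wstage_iff {i j s : ℕ} (hs : σ u = s) :
    u ∈ Wstage c n b σ i j ↔ s + gam c n b (i - 1) ≤ j ∧ j < s + gam c n b i := by
  simp only [Wstage, mem_filter, mem_univ, true_and, hs]
  norm_cast

lemma exists_natCast_of_mem_Wstage {i j : ℕ} (hu : u ∈ Wstage c n b σ i j) :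
    ∃ s : ℕ, σ u = s :=
  ⟨(σ u).toNat, (ENat.natCast_toNat (ne_top_of_mem_Wstage hu)).symm⟩

lemma exists_lt_mem_Wstage (hc : 0 ≤ c) {ω i t s : ℕ} (hs : σ u = s)
    (hleft : s + gam c n b ω ≤ t) (hbefore : t < s + gam c n b i) :
    ∃ m, ω < m ∧ u ∈ Wstage c n b σ m t := by
  have hex : ∃ m, t < s + gam c n b m := ⟨i, hbefore⟩
  have hm := Nat.find_spec hex
  have hωm : ω < Nat.find hex := by
    by_contra! h
    have := gam_monotone (n := n) (b := b) hc h
    omega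
  have hmin := Nat.find_min hex (Nat.sub_one_lt_of_lt hωm)
  exact ⟨Nat.find hex, hωm, (mem_Wstage_iff hs).mpr ⟨by omega, hm⟩⟩

lemma card_Wstage_le {k : ℕ} (hmost : (univ.filter fun u => σ u ≠ ⊤).card ≤ k) (i j : ℕ) :
    (Wstage c n b σ i j).card ≤ k :=
  (card_le_card fun _ hu => mem_filter.mpr ⟨mem_univ _, ne_top_of_mem_Wstage hu⟩).trans hmost

lemma add_one_lt_log_of_card_Wstage_gt {k ω j : ℕ}
    (hmost : (univ.filter fun u => σ u ≠ ⊤).card ≤ k)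
    (hbig : 2 ^ (ω + 2) < (Wstage c n b σ ω j).card) : ω + 1 < Nat.log 2 k := by
  have h := (hbig.trans_le (card_Wstage_le hmost ω j)).trans
    (Nat.lt_pow_succ_log_self one_lt_two k)
  have := (Nat.pow_lt_pow_iff_right one_lt_two).mp h
  omega

lemma Wstage_subset_Wstage_succ (hc : 0 ≤ c) {ω j₀ j : ℕ}
    (h₁ : j₀ + gam c n b ω ≤ j + gam c n b (ω - 1)) (h₂ : j < j₀ + gam c n b ω) :
    Wstage c n b σ ω j₀ ⊆ Wstage c n b σ (ω + 1) j := by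
  intro u hu
  obtain ⟨s, hs⟩ := exists_natCast_of_mem_Wstage hu
  have := two_mul_gam_le_gam_succ_add_one (n := n) (b := b) hc ω
  rw [mem_Wstage_iff hs] at hu
  rw [mem_Wstage_iff hs, Nat.add_sub_cancel]
  omega

lemma card_Wstage_eq_zero_of_le (hc : 0 ≤ c) {ω t j i : ℕ}
    (hz : ∀ i, ω < i → (Wstage c n b σ i t).card = 0) (h₁ : t ≤ j)
    (h₂ : j + gam c n b ω ≤ t + gam c n b (ω + 1)) (hi : ω + 1 < i) :
    (Wstage c n b σ i j).card = 0 := by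
  rw [card_eq_zero, eq_empty_iff_forall_notMem]
  intro u hu
  obtain ⟨s, hs⟩ := exists_natCast_of_mem_Wstage hu
  rw [mem_Wstage_iff hs] at hu
  have : gam c n b (ω + 1) ≤ gam c n b (i - 1) := gam_monotone hc (by omega)
  -- `u` would already be beyond stage `ω` at time `t`.
  have hleft : s + gam c n b ω ≤ t := by omega
  obtain ⟨m, hωm, hum⟩ := exists_lt_mem_Wstage hc hs hleft (hu.2.trans_le' h₁)
  exact card_ne_zero_of_mem hum (hz m hωm)

end Stages

section Intervals

variable {c : ℝ} {n b : ℕ} {σ : Fin n → ℕ∞} {ω t₁ t₂ : ℕ}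

lemma semibalancedInterval.balancedInterval (h : semibalancedInterval c n b σ ω t₁ t₂)
    (hle : ∀ j ∈ Icc t₁ t₂, (Wstage c n b σ ω j).card ≤ 2 ^ (ω + 2)) :
    balancedInterval c n b σ ω t₁ t₂ :=
  ⟨h.1, fun j hj => ⟨(h.2 j hj).1, hle j hj, (h.2 j hj).2⟩⟩

lemma exists_semibalancedInterval_succ (hc : 0 ≤ c) (h : semibalancedInterval c n b σ ω t₁ t₂)
    {j₀ : ℕ} (hj₀ : j₀ ∈ Icc t₁ t₂) (hbig : 2 ^ (ω + 2) < (Wstage c n b σ ω j₀).card) :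
    ∃ t₁' t₂', semibalancedInterval c n b σ (ω + 1) t₁' t₂' := by
  obtain ⟨hsize, hstep⟩ := h
  rw [mem_Icc] at hj₀
  have hφpos : 1 ≤ phi c n b (ω - 1) := by omega
  have hω : 2 ≤ ω := by
    by_contra!
    rw [show ω - 1 = 0 by omega, phi_zero] at hφpos
    omega
  have hg : gam c n b (ω - 1) = phi c n b ω := by
    rw [gam_of_ne_zero (by omega), Nat.sub_add_cancel (by omega)]
  have hm : phi c n b (ω - 1) ≤ phi c n b ω := phi_monotone hc (Nat.sub_le ω 1)
  have hd₁ := two_mul_gam_le_gam_succ_add_one (n := n) (b := b) hc (ω - 1)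
  have hd₂ := two_mul_gam_le_gam_succ_add_one (n := n) (b := b) hc ω
  rw [Nat.sub_add_cancel (by omega)] at hd₁
  obtain ⟨e, he⟩ : ∃ e, gam c n b (ω - 1) = e + 1 := ⟨phi c n b ω - 1, by omega⟩
  obtain ⟨d, hd⟩ : ∃ d, gam c n b ω = gam c n b (ω - 1) + d :=
    ⟨_, (Nat.add_sub_cancel' (by omega)).symm⟩
  -- the window `[j₀ + γ_ω − γ_(ω−1), j₀ + γ_ω − 1]`, of length `γ_(ω−1) = φ(ω)`
  refine ⟨j₀ + d, j₀ + d + e, by rw [Nat.add_sub_cancel]; omega, fun j hj => ?_⟩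
  rw [mem_Icc] at hj
  refine ⟨?_, fun i hi => ?_⟩
  · calc 2 ^ (ω + 1) ≤ 2 ^ (ω + 2) := Nat.pow_le_pow_right two_pos (by omega)
      _ ≤ (Wstage c n b σ ω j₀).card := hbig.le
      _ ≤ (Wstage c n b σ (ω + 1) j).card :=
        card_le_card (Wstage_subset_Wstage_succ hc (by omega) (by omega))
  · exact card_Wstage_eq_zero_of_le hc (hstep t₂ (mem_Icc.mpr ⟨by omega, le_rfl⟩)).2
      (by omega) (by omega) hi

theorem exists_balancedInterval_of_semibalancedInterval {k : ℕ} (hc : 0 ≤ c)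
    (hmost : (univ.filter fun u => σ u ≠ ⊤).card ≤ k) {ω t₁ t₂ : ℕ} (hω : ω ≤ Nat.log 2 k)
    (h : semibalancedInterval c n b σ ω t₁ t₂) :
    ∃ ω' t₁' t₂' : ℕ, ω ≤ ω' ∧ ω' ≤ Nat.log 2 k ∧ balancedInterval c n b σ ω' t₁' t₂' := by
  by_cases hle : ∀ j ∈ Icc t₁ t₂, (Wstage c n b σ ω j).card ≤ 2 ^ (ω + 2)
  · exact ⟨ω, t₁, t₂, le_rfl, hω, h.balancedInterval hle⟩
  push Not at hle
  obtain ⟨j₀, hj₀, hbig⟩ := hle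
  have hlt := add_one_lt_log_of_card_Wstage_gt hmost hbig
  obtain ⟨t₁', t₂', h'⟩ := exists_semibalancedInterval_succ hc h hj₀ hbig
  obtain ⟨ω', t₁'', t₂'', hω', hω'k, hbal⟩ :=
    exists_balancedInterval_of_semibalancedInterval hc hmost (by omega) h'
  exact ⟨ω', t₁'', t₂'', by omega, hω'k, hbal⟩
termination_by Nat.log 2 k - ω

end Intervals

theorem statement_7_general (n b k : ℕ)
    (c : ℝ) (hc : 0 < c) (σ : Fin n → ℕ∞)
    (hmost : (Finset.univ.filter fun u => σ u ≠ ⊤).card ≤ k)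
    (ω t₁ t₂ : ℕ) (hω2 : ω ≤ Nat.log 2 k)
    (hsize : t₂ + 1 = t₁ + phi c n b (ω - 1))
    (ha : ∀ j ∈ Finset.Icc t₁ t₂, 2 ^ ω ≤ (Wstage c n b σ ω j).card)
    (hz : ∀ j ∈ Finset.Icc t₁ t₂, ∀ i, ω < i → (Wstage c n b σ i j).card = 0) :
    ∃ ω' t₁' t₂' : ℕ, ω ≤ ω' ∧ ω' ≤ Nat.log 2 k ∧
      balancedInterval c n b σ ω' t₁' t₂' :=
  exists_balancedInterval_of_semibalancedInterval hc.le hmost hω2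
    ⟨hsize, fun j hj => ⟨ha j hj, hz j hj⟩⟩

/-- Suppose at most `k ≤ n` stations are ever activated, and `[t₁,t₂]` is an interval of size
`φ(ω−1)`, for some `1 ≤ ω ≤ log₂ k`, such that for every `j ∈ [t₁,t₂]`: (a') `|W_ω(j)| ≥ 2^ω`
and (b') `|W_i(j)| = 0` for every `i > ω`.  Then there exists an `ω'`-balanced interval for
some `ω ≤ ω' ≤ log₂ k`. -/
theorem statement_7 (n b k : ℕ) (hn : 0 < n) (hb : 0 < b) (hk : 0 < k) (hkn : k ≤ n)
    (c : ℝ) (hc : 0 < c) (σ : Fin n → ℕ∞)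
    (hmost : (Finset.univ.filter fun u => σ u ≠ ⊤).card ≤ k)
    (ω t₁ t₂ : ℕ) (hω1 : 1 ≤ ω) (hω2 : ω ≤ Nat.log 2 k)
    (hsize : t₂ + 1 = t₁ + phi c n b (ω - 1))
    (ha : ∀ j ∈ Finset.Icc t₁ t₂, 2 ^ ω ≤ (Wstage c n b σ ω j).card)
    (hz : ∀ j ∈ Finset.Icc t₁ t₂, ∀ i, ω < i → (Wstage c n b σ i j).card = 0) :
    ∃ ω' t₁' t₂' : ℕ, ω ≤ ω' ∧ ω' ≤ Nat.log 2 k ∧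
      balancedInterval c n b σ ω' t₁' t₂' :=
  statement_7_general n b k c hc σ hmost ω t₁ t₂ hω2 hsize ha hz
end
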